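/- If the value of a robustness tree is zero, then for every assignment of positive weights the value remains zero; i.e., no positive weight valuation can change a zero robustness value. -/
import Mathlib


/-- Robustness tree: a leaf carries a real value; Min/Max nodes carry a
nonempty list of (weight, subtree) pairs (encoded as head child + tail). -/
inductive RTree where
  | leaf : ℝ → RTree
  | minNode : (ℝ × RTree) → List (ℝ × RTree) → RTree
  | maxNode : (ℝ × RTree) → List (ℝ × RTree) → RTree

mutual
/-- Value of a robustness tree: weights scale children values, combined by min/max. -/
noncomputable def RTree.val : RTree → ℝ
  | .leaf r => r
  | .minNode c cs => (RTree.vals cs).foldl min (c.1 * c.2.val)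
  | .maxNode c cs => (RTree.vals cs).foldl max (c.1 * c.2.val)

noncomputable def RTree.vals : List (ℝ × RTree) → List ℝ
  | [] => []
  | p :: ps => p.1 * p.2.val :: RTree.vals ps
end

mutual
/-- All weights in the tree are strictly positive. -/
def RTree.weightsPos : RTree → Prop
  | .leaf _ => True
  | .minNode c cs => 0 < c.1 ∧ c.2.weightsPos ∧ RTree.weightsPosList cs
  | .maxNode c cs => 0 < c.1 ∧ c.2.weightsPos ∧ RTree.weightsPosList cs

def RTree.weightsPosList : List (ℝ × RTree) → Prop
  | [] => True
  | p :: ps => 0 < p.1 ∧ p.2.weightsPos ∧ RTree.weightsPosList ps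
end

mutual
/-- All leaf values in the tree are strictly positive. -/
def RTree.leavesPos : RTree → Prop
  | .leaf r => 0 < r
  | .minNode c cs => c.2.leavesPos ∧ RTree.leavesPosList cs
  | .maxNode c cs => c.2.leavesPos ∧ RTree.leavesPosList cs

def RTree.leavesPosList : List (ℝ × RTree) → Prop
  | [] => True
  | p :: ps => p.2.leavesPos ∧ RTree.leavesPosList ps
end

mutual
/-- Every node (subtree) of the tree has strictly positive value. -/
def RTree.allNodesPos : RTree → Prop
  | .leaf r => 0 < r
  | t@(.minNode c cs) => 0 < t.val ∧ c.2.allNodesPos ∧ RTree.allNodesPosList cs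
  | t@(.maxNode c cs) => 0 < t.val ∧ c.2.allNodesPos ∧ RTree.allNodesPosList cs

def RTree.allNodesPosList : List (ℝ × RTree) → Prop
  | [] => True
  | p :: ps => p.2.allNodesPos ∧ RTree.allNodesPosList ps
end

mutual
/-- Two trees have the same structure and leaf values (weights may differ). -/
def RTree.SameShape : RTree → RTree → Prop
  | .leaf r, .leaf r' => r = r'
  | .minNode c cs, .minNode c' cs' => RTree.SameShape c.2 c'.2 ∧ RTree.SameShapeList cs cs'
  | .maxNode c cs, .maxNode c' cs' => RTree.SameShape c.2 c'.2 ∧ RTree.SameShapeList cs cs'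
  | _, _ => False

def RTree.SameShapeList : List (ℝ × RTree) → List (ℝ × RTree) → Prop
  | [], [] => True
  | p :: ps, q :: qs => RTree.SameShape p.2 q.2 ∧ RTree.SameShapeList ps qs
  | _, _ => False
end


lemma sign_monotone : Monotone Real.sign := by
  intro a b h
  rcases lt_trichotomy a 0 with ha | ha | ha
  · rw [Real.sign_of_neg ha]
    rcases Real.sign_apply_eq b with hb | hb | hb <;> rw [hb] <;> norm_num
  · subst ha
    rcases eq_or_lt_of_le h with hb | hb
    · rw [← hb]
    · rw [Real.sign_of_pos hb, Real.sign_zero]; norm_num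
  · rw [Real.sign_of_pos ha, Real.sign_of_pos (lt_of_lt_of_le ha h)]

lemma sign_pos_mul {w v : ℝ} (hw : 0 < w) : Real.sign (w * v) = Real.sign v := by
  rcases lt_trichotomy v 0 with hv | hv | hv
  · rw [Real.sign_of_neg hv, Real.sign_of_neg (mul_neg_of_pos_of_neg hw hv)]
  · subst hv; simp
  · rw [Real.sign_of_pos hv, Real.sign_of_pos (mul_pos hw hv)]

lemma sign_foldl_min (l : List ℝ) (a : ℝ) :
    Real.sign (l.foldl min a) = (l.map Real.sign).foldl min (Real.sign a) := by
  induction l generalizing a with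
  | nil => rfl
  | cons b l ih => simp [List.foldl_cons, ih, sign_monotone.map_min]

lemma sign_foldl_max (l : List ℝ) (a : ℝ) :
    Real.sign (l.foldl max a) = (l.map Real.sign).foldl max (Real.sign a) := by
  induction l generalizing a with
  | nil => rfl
  | cons b l ih => simp [List.foldl_cons, ih, sign_monotone.map_max]

mutual
theorem RTree.sign_val_eq (t t' : RTree) (hshape : RTree.SameShape t t')
    (hw : t.weightsPos) (hw' : t'.weightsPos) :
    Real.sign t.val = Real.sign t'.val := by
  cases t with
  | leaf r =>
    cases t' with
    | leaf r' => cases hshape; rfl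
    | minNode c cs => exact absurd hshape id
    | maxNode c cs => exact absurd hshape id
  | minNode c cs =>
    cases t' with
    | leaf r' => exact absurd hshape id
    | minNode c' cs' =>
      simp only [RTree.val, sign_foldl_min]
      rw [sign_pos_mul hw.1, sign_pos_mul hw'.1,
        RTree.sign_val_eq c.2 c'.2 hshape.1 hw.2.1 hw'.2.1,
        RTree.sign_vals_eq cs cs' hshape.2 hw.2.2 hw'.2.2]
    | maxNode c' cs' => exact absurd hshape id
  | maxNode c cs =>
    cases t' with
    | leaf r' => exact absurd hshape id
    | minNode c' cs' => exact absurd hshape id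
    | maxNode c' cs' =>
      simp only [RTree.val, sign_foldl_max]
      rw [sign_pos_mul hw.1, sign_pos_mul hw'.1,
        RTree.sign_val_eq c.2 c'.2 hshape.1 hw.2.1 hw'.2.1,
        RTree.sign_vals_eq cs cs' hshape.2 hw.2.2 hw'.2.2]

theorem RTree.sign_vals_eq (l l' : List (ℝ × RTree)) (hshape : RTree.SameShapeList l l')
    (hw : RTree.weightsPosList l) (hw' : RTree.weightsPosList l') :
    (RTree.vals l).map Real.sign = (RTree.vals l').map Real.sign := by
  cases l with
  | nil =>
    cases l' with
    | nil => rfl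
    | cons q qs => exact absurd hshape id
  | cons p ps =>
    cases l' with
    | nil => exact absurd hshape id
    | cons q qs =>
      simp only [RTree.vals, List.map_cons]
      rw [sign_pos_mul hw.1, sign_pos_mul hw'.1,
        RTree.sign_val_eq p.2 q.2 hshape.1 hw.2.1 hw'.2.1,
        RTree.sign_vals_eq ps qs hshape.2 hw.2.2 hw'.2.2]
end

/-- If the value of a robustness tree is zero, then it is zero for every
assignment of positive weights to the same structure with the same leaves. -/
theorem RTree.val_eq_zero_weight_independent (t t' : RTree)
    (hshape : RTree.SameShape t t')
    (hw : t.weightsPos) (hw' : t'.weightsPos)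
    (h0 : t.val = 0) : t'.val = 0 := by
  have := RTree.sign_val_eq t t' hshape hw hw'
  rw [h0, Real.sign_zero] at this
  exact Real.sign_eq_zero_iff.mp this.symm
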